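/- Formulations (CP1) and (P2) have the same LP relaxation bound: v(CP1) = v(P2), where v(CP1) is the infimum of f over F(CP1) and v(P2) is the infimum of f over F(P2). -/

import Mathlib

open Finset
open scoped Classical

noncomputable section

/-- Radius of a nonempty set `S` of open facilities: the largest, over clients `i`,
of the distance from `i` to the closest facility in `S`. -/
def radius {N M : ℕ} (hN : 0 < N) (d : Fin N → Fin M → ℝ)
    (S : Finset (Fin M)) (hS : S.Nonempty) : ℝ :=
  (univ : Finset (Fin N)).sup' ⟨⟨0, hN⟩, mem_univ _⟩ fun i => S.inf' hS fun j => d i j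

/-- Optimal radius of the `p`-center problem. -/
def opt {N M : ℕ} (hN : 0 < N) (d : Fin N → Fin M → ℝ) (p : ℕ) : ℝ :=
  sInf { r | ∃ S : Finset (Fin M), ∃ hS : S.Nonempty, S.card ≤ p ∧ r = radius hN d S hS }

/-- Objective function `f(y, z) = D^0 + ∑_{k=1}^K (D^k - D^{k-1}) z^k`
(`z` is 0-indexed: entry `k : Fin K` stands for the paper's `z^{k+1}`). -/
def obj {K : ℕ} (D : Fin (K + 1) → ℝ) (z : Fin K → ℝ) : ℝ :=
  D 0 + ∑ k : Fin K, (D k.succ - D k.castSucc) * z k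

/-- Ordering constraints `z^k ≥ z^{k+1}`, `k ∈ {1, …, K-1}` (0-indexed `z`). -/
def Ordered {K : ℕ} (z : Fin K → ℝ) : Prop :=
  ∀ k : Fin K, ∀ h : (k : ℕ) + 1 < K, z ⟨(k : ℕ) + 1, h⟩ ≤ z k

/-- `ActiveIdx d D i k` says that the paper index `κ = k+1` belongs to `S_i ∪ {K}`:
either `κ ≤ K - 1` and some facility `j` satisfies `d i j = D^κ`, or `κ = K`. -/
def ActiveIdx {N M K : ℕ} (d : Fin N → Fin M → ℝ) (D : Fin (K + 1) → ℝ)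
    (i : Fin N) (k : Fin K) : Prop :=
  ((k : ℕ) + 1 < K ∧ ∃ j, d i j = D k.succ) ∨ (k : ℕ) + 1 = K

/-- LP-relaxed feasible set of formulation `(P2)`. -/
def FP2 {N M K : ℕ} (d : Fin N → Fin M → ℝ) (D : Fin (K + 1) → ℝ) (p : ℕ) :
    Set ((Fin M → ℝ) × (Fin K → ℝ)) :=
  { yz | (∀ j, 0 ≤ yz.1 j ∧ yz.1 j ≤ 1) ∧ (∀ k, 0 ≤ yz.2 k ∧ yz.2 k ≤ 1) ∧
    1 ≤ ∑ j, yz.1 j ∧ ∑ j, yz.1 j ≤ (p : ℝ) ∧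
    ∀ i : Fin N, ∀ k : Fin K,
      1 ≤ yz.2 k + ∑ j ∈ univ.filter (fun j => d i j < D k.succ), yz.1 j }

/-- LP-relaxed feasible set of formulation `(CP1)`. -/
def FCP1 {N M K : ℕ} (d : Fin N → Fin M → ℝ) (D : Fin (K + 1) → ℝ) (p : ℕ) :
    Set ((Fin M → ℝ) × (Fin K → ℝ)) :=
  { yz | (∀ j, 0 ≤ yz.1 j ∧ yz.1 j ≤ 1) ∧ (∀ k, 0 ≤ yz.2 k ∧ yz.2 k ≤ 1) ∧
    1 ≤ ∑ j, yz.1 j ∧ ∑ j, yz.1 j ≤ (p : ℝ) ∧ Ordered yz.2 ∧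
    ∀ i : Fin N, ∀ k : Fin K, ActiveIdx d D i k →
      1 ≤ yz.2 k + ∑ j ∈ univ.filter (fun j => d i j < D k.succ), yz.1 j }

/-- Integer feasible solutions of formulation `(CP1)`. -/
def CP1Int {N M K : ℕ} (d : Fin N → Fin M → ℝ) (D : Fin (K + 1) → ℝ) (p : ℕ) :
    Set ((Fin M → ℝ) × (Fin K → ℝ)) :=
  { yz | (∀ j, yz.1 j = 0 ∨ yz.1 j = 1) ∧ (∀ k, yz.2 k = 0 ∨ yz.2 k = 1) ∧
    1 ≤ ∑ j, yz.1 j ∧ ∑ j, yz.1 j ≤ (p : ℝ) ∧ Ordered yz.2 ∧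
    ∀ i : Fin N, ∀ k : Fin K, ActiveIdx d D i k →
      1 ≤ yz.2 k + ∑ j ∈ univ.filter (fun j => d i j < D k.succ), yz.1 j }

/-- LP-relaxed feasible set of formulation `(CP2)`. -/
def FCP2 {N M K : ℕ} (d : Fin N → Fin M → ℝ) (D : Fin (K + 1) → ℝ) (p : ℕ) :
    Set ((Fin M → ℝ) × ℝ) :=
  { yr | (∀ j, 0 ≤ yr.1 j ∧ yr.1 j ≤ 1) ∧ 0 ≤ yr.2 ∧ yr.2 ≤ (K : ℝ) ∧
    1 ≤ ∑ j, yr.1 j ∧ ∑ j, yr.1 j ≤ (p : ℝ) ∧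
    ∀ i : Fin N, ∀ k : Fin K, ActiveIdx d D i k →
      ((k : ℕ) + 1 : ℝ) ≤ yr.2 +
        ((k : ℕ) + 1 : ℝ) * ∑ j ∈ univ.filter (fun j => d i j < D k.succ), yr.1 j }

/-- Integer feasible solutions of formulation `(CP2)`. -/
def CP2Int {N M K : ℕ} (d : Fin N → Fin M → ℝ) (D : Fin (K + 1) → ℝ) (p : ℕ)
    (y : Fin M → ℝ) (r : ℤ) : Prop :=
  (∀ j, y j = 0 ∨ y j = 1) ∧ 0 ≤ r ∧ r ≤ (K : ℤ) ∧
    1 ≤ ∑ j, y j ∧ ∑ j, y j ≤ (p : ℝ) ∧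
    ∀ i : Fin N, ∀ k : Fin K, ActiveIdx d D i k →
      ((k : ℕ) + 1 : ℝ) ≤ (r : ℝ) +
        ((k : ℕ) + 1 : ℝ) * ∑ j ∈ univ.filter (fun j => d i j < D k.succ), y j

/-! Every point of `F(CP1)` lies in `F(P2)`: if `κ ∉ S_i ∪ {K}`, no distance from client `i`
equals `D^κ`, so the `(P2)` constraint at `κ` has the same facility sum as the one at `κ + 1`,
and `z^κ ≥ z^{κ+1}` lets it be inherited downwards from the next active index. Conversely,
replacing `z` by its prefix minima `min_{l ≤ k} z^l` turns a point of `F(P2)` into a point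
of `F(CP1)` with no larger objective, since the `(P2)` facility sums grow with `k`. -/

section PrefixMin

variable {ι α : Type*} [Preorder ι] [LocallyFiniteOrderBot ι] [SemilatticeInf α]

def prefixMin (z : ι → α) (k : ι) : α :=
  (Iic k).inf' nonempty_Iic z

theorem le_prefixMin_iff {z : ι → α} {k : ι} {a : α} : a ≤ prefixMin z k ↔ ∀ l ≤ k, a ≤ z l := by
  simp only [prefixMin, le_inf'_iff, mem_Iic]

theorem prefixMin_le (z : ι → α) : prefixMin z ≤ z :=
  fun k => le_prefixMin_iff.1 le_rfl k le_rfl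

theorem prefixMin_antitone (z : ι → α) : Antitone (prefixMin z) :=
  fun _ _ hkl => le_prefixMin_iff.2 fun m hm => le_prefixMin_iff.1 le_rfl m (hm.trans hkl)

end PrefixMin

theorem sum_filter_lt_mono {ι : Type*} [Fintype ι] {f y : ι → ℝ} (hy : ∀ j, 0 ≤ y j)
    {a b : ℝ} (hab : a ≤ b) :
    ∑ j ∈ univ.filter (fun j => f j < a), y j ≤ ∑ j ∈ univ.filter (fun j => f j < b), y j :=
  sum_le_sum_of_subset_of_nonneg (monotone_filter_right _ fun _ _ h => h.trans_le hab)
    fun j _ _ => hy j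

theorem obj_mono {K : ℕ} {D : Fin (K + 1) → ℝ} (hD : Monotone D) : Monotone (obj D) :=
  fun _ _ hzw => add_le_add_right (sum_le_sum fun k _ =>
    mul_le_mul_of_nonneg_left (hzw k) (sub_nonneg.2 (hD Fin.castSucc_lt_succ.le))) _

section Cover

variable {N M K : ℕ} {d : Fin N → Fin M → ℝ} {D : Fin (K + 1) → ℝ}

theorem filter_lt_succ_eq_of_not_activeIdx (hD : StrictMono D)
    (hrange : Set.range D = { x : ℝ | ∃ i j, d i j = x }) {i : Fin N} {k : Fin K}
    (hk : ¬ActiveIdx d D i k) :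
    ∃ h : (k : ℕ) + 1 < K, univ.filter (fun j => d i j < D k.succ) =
      univ.filter (fun j => d i j < D (⟨k + 1, h⟩ : Fin K).succ) := by
  simp only [ActiveIdx, not_or, not_and, not_exists] at hk
  have hlt : (k : ℕ) + 1 < K := by have := k.isLt; omega
  refine ⟨hlt, filter_congr fun j _ => ?_⟩
  obtain ⟨s, hs⟩ : d i j ∈ Set.range D := hrange ▸ ⟨i, j, rfl⟩
  have hne : (s : ℕ) ≠ k + 1 := fun h => hk.1 hlt j (hs.symm.trans (congrArg D (Fin.ext h)))
  rw [← hs, hD.lt_iff_lt, hD.lt_iff_lt, Fin.lt_def, Fin.lt_def]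
  simp only [Fin.val_succ]
  omega

theorem one_le_cover_of_mem_FCP1 (hD : StrictMono D)
    (hrange : Set.range D = { x : ℝ | ∃ i j, d i j = x }) {p : ℕ}
    {yz : (Fin M → ℝ) × (Fin K → ℝ)} (hyz : yz ∈ FCP1 d D p) (i : Fin N) (k : Fin K) :
    1 ≤ yz.2 k + ∑ j ∈ univ.filter (fun j => d i j < D k.succ), yz.1 j := by
  by_cases hk : ActiveIdx d D i k
  · exact hyz.2.2.2.2.2 i k hk
  · obtain ⟨hlt, hfilter⟩ := filter_lt_succ_eq_of_not_activeIdx hD hrange hk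
    rw [hfilter]
    calc 1 ≤ yz.2 ⟨k + 1, hlt⟩ + _ := one_le_cover_of_mem_FCP1 hD hrange hyz i ⟨k + 1, hlt⟩
      _ ≤ _ := add_le_add_left (hyz.2.2.2.2.1 k hlt) _
termination_by K - k

theorem FCP1_subset_FP2 (hD : StrictMono D)
    (hrange : Set.range D = { x : ℝ | ∃ i j, d i j = x }) (p : ℕ) :
    FCP1 d D p ⊆ FP2 d D p := fun _ hyz =>
  ⟨hyz.1, hyz.2.1, hyz.2.2.1, hyz.2.2.2.1, one_le_cover_of_mem_FCP1 hD hrange hyz⟩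

theorem prefixMin_mem_FCP1 (hD : Monotone D) {p : ℕ} {yz : (Fin M → ℝ) × (Fin K → ℝ)}
    (hyz : yz ∈ FP2 d D p) : (yz.1, prefixMin yz.2) ∈ FCP1 d D p := by
  obtain ⟨hy, hz, hsum1, hsump, hcov⟩ := hyz
  refine ⟨hy, fun k => ⟨le_prefixMin_iff.2 fun l _ => (hz l).1,
    (prefixMin_le _ k).trans (hz k).2⟩, hsum1, hsump,
    fun k _ => prefixMin_antitone _ (Fin.mk_le_mk.2 k.val.le_succ), fun i k _ => ?_⟩
  have hcov_le : ∀ l ≤ k, 1 - ∑ j ∈ univ.filter (fun j => d i j < D k.succ), yz.1 j ≤ yz.2 l :=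
    fun l hl => by
      have := sum_filter_lt_mono (f := d i) (fun j => (hy j).1) (hD (Fin.succ_le_succ_iff.2 hl))
      linarith [hcov i l]
  linarith [le_prefixMin_iff.2 hcov_le]

end Cover

theorem stmt4_general {N M K : ℕ}
    (d : Fin N → Fin M → ℝ) (p : ℕ)
    (D : Fin (K + 1) → ℝ) (hD : StrictMono D)
    (hrange : Set.range D = { x : ℝ | ∃ i j, d i j = x }) :
    sInf { v | ∃ yz ∈ FCP1 d D p, v = obj D yz.2 } =
      sInf { v | ∃ yz ∈ FP2 d D p, v = obj D yz.2 } := by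
  apply csInf_eq_csInf_of_forall_exists_le
  · rintro _ ⟨yz, hyz, rfl⟩
    exact ⟨_, ⟨yz, FCP1_subset_FP2 hD hrange p hyz, rfl⟩, le_rfl⟩
  · rintro _ ⟨yz, hyz, rfl⟩
    exact ⟨_, ⟨_, prefixMin_mem_FCP1 hD.monotone hyz, rfl⟩, obj_mono hD.monotone (prefixMin_le _)⟩

/-- `(CP1)` and `(P2)` have the same LP relaxation bound. -/
theorem stmt4 {N M K : ℕ} (hN : 0 < N) (hM : 0 < M)
    (d : Fin N → Fin M → ℝ) (p : ℕ) (hp1 : 1 ≤ p) (hpM : p ≤ M)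
    (D : Fin (K + 1) → ℝ) (hD : StrictMono D)
    (hrange : Set.range D = { x : ℝ | ∃ i j, d i j = x }) :
    sInf { v | ∃ yz ∈ FCP1 d D p, v = obj D yz.2 } =
      sInf { v | ∃ yz ∈ FP2 d D p, v = obj D yz.2 } :=
  stmt4_general d p D hD hrange
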